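/- A map A : F^d → F^d is both a Euclidean similarity and a Galilean similarity if and only if A is a trivial Euclidean similarity. -/

import Mathlib

namespace Spacetimes

open Finset

variable {F : Type*} [Field F] [LinearOrder F] [IsStrictOrderedRing F] {d : ℕ}

/-- The Euclidean scalar product on `Fin d → F`. -/
def euclProd (p q : Fin d → F) : F := ∑ i, p i * q i

/-- The Minkowski product on `Fin d → F`; index `0` is the time coordinate. -/
def minkProd [NeZero d] (p q : Fin d → F) : F :=
  p 0 * q 0 - ∑ i ∈ Finset.univ.erase (0 : Fin d), p i * q i

/-- The squared distance function associated to a product `B`. -/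
def sqDist (B : (Fin d → F) → (Fin d → F) → F) (p q : Fin d → F) : F :=
  B (p - q) (p - q)

/-- An affine transformation: a linear bijection composed with a translation. -/
def IsAffine (A : (Fin d → F) → (Fin d → F)) : Prop :=
  ∃ (L : (Fin d → F) ≃ₗ[F] (Fin d → F)) (t : Fin d → F), ∀ p, A p = L p + t

/-- A Euclidean similarity: an affine transformation scaling squared
Euclidean distances by a constant factor. -/
def EuclSim (A : (Fin d → F) → (Fin d → F)) : Prop :=
  IsAffine A ∧ ∃ a : F, ∀ p q : Fin d → F,
    sqDist euclProd (A p) (A q) = a * sqDist euclProd p q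

/-- A Poincaré similarity: an affine transformation scaling squared
Minkowski distances by a constant factor. -/
def PoiSim [NeZero d] (A : (Fin d → F) → (Fin d → F)) : Prop :=
  IsAffine A ∧ ∃ a : F, ∀ p q : Fin d → F,
    sqDist minkProd (A p) (A q) = a * sqDist minkProd p q

/-- A Galilean similarity. -/
def GalSim [NeZero d] (A : (Fin d → F) → (Fin d → F)) : Prop :=
  IsAffine A ∧ ∃ a : F, ∀ p q : Fin d → F, p 0 = q 0 →
    A p 0 = A q 0 ∧ sqDist euclProd (A p) (A q) = a * sqDist euclProd p q

/-- A map respects a binary relation. -/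
def Respects2 {α : Type*} (f : α → α) (R : α → α → Prop) : Prop :=
  ∀ p q, R p q ↔ R (f p) (f q)

/-- A map respects a ternary relation. -/
def Respects3 {α : Type*} (f : α → α) (R : α → α → α → Prop) : Prop :=
  ∀ p q r, R p q r ↔ R (f p) (f q) (f r)

/-- A map respects a 4-ary relation. -/
def Respects4 {α : Type*} (f : α → α) (R : α → α → α → α → Prop) : Prop :=
  ∀ p q r s, R p q r s ↔ R (f p) (f q) (f r) (f s)

/-- Absolute simultaneity. -/
def SimRel [NeZero d] (p q : Fin d → F) : Prop := p 0 = q 0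

/-- Being at rest (same spatial components). -/
def RestRel [NeZero d] (p q : Fin d → F) : Prop := ∀ i, i ≠ 0 → p i = q i

/-- A trivial Euclidean similarity: a Euclidean similarity respecting `RestRel`. -/
def TrivEuclSim [NeZero d] (A : (Fin d → F) → (Fin d → F)) : Prop :=
  EuclSim A ∧ Respects2 A RestRel

/-- A trivial Galilean similarity: a Galilean similarity respecting `RestRel`. -/
def TrivGalSim [NeZero d] (A : (Fin d → F) → (Fin d → F)) : Prop :=
  GalSim A ∧ Respects2 A RestRel

/-- Betweenness. -/
def Bw (p q r : Fin d → F) : Prop :=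
  ∃ l : F, 0 ≤ l ∧ l ≤ 1 ∧ q = p + l • (r - p)

/-- Lightlike relatedness. -/
def Light [NeZero d] (p q : Fin d → F) : Prop :=
  (p 0 - q 0) ^ 2 = ∑ i ∈ Finset.univ.erase (0 : Fin d), (p i - q i) ^ 2

/-- Euclidean congruence of segments. -/
def CongE (p q r s : Fin d → F) : Prop :=
  sqDist euclProd p q = sqDist euclProd r s

/-- Minkowski congruence of segments. -/
def CongM [NeZero d] (p q r s : Fin d → F) : Prop :=
  sqDist minkProd p q = sqDist minkProd r s

/-- Congruence on simultaneity. -/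
def CongS [NeZero d] (p q r s : Fin d → F) : Prop :=
  CongE p q r s ∧ SimRel p q ∧ SimRel r s

/-- The time axis. -/
def timeAxis (F : Type*) [Field F] [LinearOrder F] [IsStrictOrderedRing F] (d : ℕ) [NeZero d] :
    Set (Fin d → F) := {p | ∀ i, i ≠ 0 → p i = 0}

/-- The simultaneity at the origin. -/
def simul0 (F : Type*) [Field F] [LinearOrder F] [IsStrictOrderedRing F] (d : ℕ) [NeZero d] :
    Set (Fin d → F) := {p | p 0 = 0}

/-- The `i`-th standard unit vector. -/
def unitVec (F : Type*) [Field F] [LinearOrder F] [IsStrictOrderedRing F] {d : ℕ} (i : Fin d) : Fin d → F :=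
  Pi.single i 1

end Spacetimes

/-
Write `A = L + t` with `L` linear. By polarization `L` scales the scalar product by a constant,
so it preserves orthogonality. For such `A`, being Galilean amounts to `L` preserving the hyperplane `simul0`,
and respecting `RestRel` to `L` preserving the time axis, the orthogonal complement of `simul0`.
If `L` maps `simul0` into itself, it maps it onto itself (finite dimension), so `L e₀` is
orthogonal to `simul0`, i.e. lies on the time axis. Conversely, if `L e₀ = c • e₀` with `c ≠ 0`,
then `L v` is orthogonal to `e₀` whenever `v` is.
-/

theorem LinearEquiv.apply_mem_iff_of_forall_apply_mem {K V : Type*} [DivisionRing K]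
    [AddCommGroup V] [Module K V] [FiniteDimensional K V] (L : V ≃ₗ[K] V) {S : Submodule K V}
    (hS : ∀ v ∈ S, L v ∈ S) (v : V) : L v ∈ S ↔ v ∈ S := by
  have hmap : S.map (L : V →ₗ[K] V) = S :=
    Submodule.eq_of_le_of_finrank_eq (by rintro _ ⟨u, hu, rfl⟩; exact hS u hu)
      (L.finrank_map_eq S)
  refine ⟨fun hv => ?_, hS v⟩
  rw [← hmap] at hv
  obtain ⟨u, hu, huv⟩ := hv
  rwa [← L.injective huv]

theorem dotProduct_apply_apply_of_dotProduct_self {ι R G : Type*} [Fintype ι] [CommRing R]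
    [NoZeroDivisors R] [NeZero (2 : R)] [FunLike G (ι → R) (ι → R)] [AddHomClass G (ι → R) (ι → R)]
    (f : G) (a : R) (h : ∀ v, f v ⬝ᵥ f v = a * (v ⬝ᵥ v)) (v w : ι → R) :
    f v ⬝ᵥ f w = a * (v ⬝ᵥ w) := by
  have hvw := h (v + w)
  simp only [map_add, add_dotProduct, dotProduct_add, h v, h w, dotProduct_comm w v,
    dotProduct_comm (f w) (f v)] at hvw
  apply mul_left_cancel₀ (two_ne_zero : (2 : R) ≠ 0)
  linear_combination hvw

section
variable {V : Type*} [AddCommGroup V] {A f : V → V}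

theorem forall_sub_mem_imp_iff (hA : ∀ p q, A p - A q = f (p - q)) (S T : Set V) :
    (∀ p q, p - q ∈ S → A p - A q ∈ T) ↔ ∀ v ∈ S, f v ∈ T := by
  refine ⟨fun h v hv => ?_, fun h p q hpq => hA p q ▸ h _ hpq⟩
  simpa [hA] using h v 0 (by simpa using hv)

theorem forall_sub_mem_iff_iff (hA : ∀ p q, A p - A q = f (p - q)) (S : Set V) :
    (∀ p q, p - q ∈ S ↔ A p - A q ∈ S) ↔ ∀ v, v ∈ S ↔ f v ∈ S := by
  refine ⟨fun h v => ?_, fun h p q => hA p q ▸ h _⟩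
  simpa [hA] using h v 0

end

namespace Spacetimes

section
variable {F : Type*} [Field F] {d : ℕ}

theorem euclProd_eq_dotProduct (p q : Fin d → F) : euclProd p q = p ⬝ᵥ q := rfl

theorem EuclSim.exists_linearEquiv [NeZero (2 : F)] {A : (Fin d → F) → (Fin d → F)} (hA : EuclSim A) :
    ∃ (L : (Fin d → F) ≃ₗ[F] (Fin d → F)) (t : Fin d → F) (a : F),
      (∀ p, A p = L p + t) ∧ ∀ v w, L v ⬝ᵥ L w = a * (v ⬝ᵥ w) := by
  obtain ⟨⟨L, t, hLt⟩, a, ha⟩ := hA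
  refine ⟨L, t, a, hLt, dotProduct_apply_apply_of_dotProduct_self L a fun v => ?_⟩
  simpa [sqDist, euclProd_eq_dotProduct, hLt] using ha v 0

theorem EuclSim.galSim_iff [NeZero d] {A : (Fin d → F) → (Fin d → F)} (hA : EuclSim A) :
    GalSim A ↔ ∀ p q : Fin d → F, p 0 = q 0 → A p 0 = A q 0 := by
  refine ⟨fun ⟨_, _, h⟩ p q hpq => (h p q hpq).1, fun h => ?_⟩
  obtain ⟨hAff, a, ha⟩ := hA
  exact ⟨hAff, a, fun p q hpq => ⟨h p q hpq, ha p q⟩⟩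

end

variable {F : Type*} [Field F] [LinearOrder F] [IsStrictOrderedRing F] {d : ℕ}

theorem dotProduct_unitVec (v : Fin d → F) (i : Fin d) : v ⬝ᵥ unitVec F i = v i := by
  simp [unitVec]

theorem unitVec_dotProduct (v : Fin d → F) (i : Fin d) : unitVec F i ⬝ᵥ v = v i := by
  rw [dotProduct_comm, dotProduct_unitVec]

section
variable [NeZero d]

variable (F d) in
def timeAxisSubmodule : Submodule F (Fin d → F) where
  carrier := timeAxis F d
  add_mem' hu hv i hi := by simp [hu i hi, hv i hi]
  zero_mem' _ _ := rfl
  smul_mem' c v hv i hi := by simp [hv i hi]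

variable (F d) in
def simul0Submodule : Submodule F (Fin d → F) where
  carrier := simul0 F d
  add_mem' {u v} hu hv := show u 0 + v 0 = 0 by rw [hu, hv, add_zero]
  zero_mem' := rfl
  smul_mem' c v hv := show c * v 0 = 0 by rw [hv, mul_zero]

@[simp]
theorem mem_simul0Submodule {v : Fin d → F} : v ∈ simul0Submodule F d ↔ v ∈ simul0 F d :=
  Iff.rfl

theorem restRel_iff_sub_mem_timeAxis (p q : Fin d → F) : RestRel p q ↔ p - q ∈ timeAxis F d := by
  simp [RestRel, timeAxis, sub_eq_zero]

theorem apply_zero_eq_iff_sub_mem_simul0 (p q : Fin d → F) : p 0 = q 0 ↔ p - q ∈ simul0 F d := by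
  simp [simul0, sub_eq_zero]

theorem unitVec_zero_mem_timeAxis : unitVec F 0 ∈ timeAxis F d := fun i hi => by
  simp [unitVec, hi]

theorem unitVec_mem_simul0 {i : Fin d} (hi : i ≠ 0) : unitVec F i ∈ simul0 F d := by
  simp [simul0, unitVec, hi.symm]

theorem eq_smul_unitVec_of_mem_timeAxis {u : Fin d → F} (hu : u ∈ timeAxis F d) :
    u = u 0 • unitVec F 0 := by
  ext i
  by_cases hi : i = 0
  · simp [hi, unitVec]
  · simp [hu i hi, unitVec, hi]

theorem forall_mem_timeAxis_iff_apply_unitVec_mem (L : (Fin d → F) ≃ₗ[F] (Fin d → F)) :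
    (∀ v, v ∈ timeAxis F d ↔ L v ∈ timeAxis F d) ↔ L (unitVec F 0) ∈ timeAxis F d := by
  refine ⟨fun h => (h _).1 unitVec_zero_mem_timeAxis, fun h v => ?_⟩
  have hmaps : ∀ v ∈ timeAxisSubmodule F d, L v ∈ timeAxisSubmodule F d := fun v hv => by
    rw [eq_smul_unitVec_of_mem_timeAxis hv, map_smul]
    exact (timeAxisSubmodule F d).smul_mem _ h
  exact (L.apply_mem_iff_of_forall_apply_mem hmaps v).symm

section
variable {L : (Fin d → F) ≃ₗ[F] (Fin d → F)} {a : F} (hL : ∀ v w, L v ⬝ᵥ L w = a * (v ⬝ᵥ w))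
include hL

theorem apply_unitVec_mem_timeAxis_of_mapsTo_simul0 (hS : ∀ v ∈ simul0 F d, L v ∈ simul0 F d) :
    L (unitVec F 0) ∈ timeAxis F d := by
  intro i hi
  have hpre : L.symm (unitVec F i) ∈ simul0 F d :=
    (L.apply_mem_iff_of_forall_apply_mem (S := simul0Submodule F d) hS _).1
      (by simpa using unitVec_mem_simul0 hi)
  calc L (unitVec F 0) i = L (unitVec F 0) ⬝ᵥ L (L.symm (unitVec F i)) := by
        rw [L.apply_symm_apply, dotProduct_unitVec]
    _ = a * L.symm (unitVec F i) 0 := by rw [hL, unitVec_dotProduct]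
    _ = 0 := by rw [show L.symm (unitVec F i) 0 = 0 from hpre, mul_zero]

theorem mapsTo_simul0_of_apply_unitVec_mem_timeAxis (hT : L (unitVec F 0) ∈ timeAxis F d) :
    ∀ v ∈ simul0 F d, L v ∈ simul0 F d := by
  intro v hv
  obtain ⟨c, hc⟩ : ∃ c, L (unitVec F 0) = c • unitVec F 0 := ⟨_, eq_smul_unitVec_of_mem_timeAxis hT⟩
  have hc0 : c ≠ 0 := by
    rintro rfl
    rw [zero_smul, ← L.map_zero] at hc
    simpa [unitVec] using L.injective hc
  have : c * L v 0 = 0 := calc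
    c * L v 0 = L v ⬝ᵥ L (unitVec F 0) := by
      rw [hc, dotProduct_smul, dotProduct_unitVec, smul_eq_mul]
    _ = a * v 0 := by rw [hL, dotProduct_unitVec]
    _ = 0 := by rw [show v 0 = 0 from hv, mul_zero]
  exact (mul_eq_zero.1 this).resolve_left hc0

theorem mapsTo_simul0_iff_forall_mem_timeAxis_iff :
    (∀ v ∈ simul0 F d, L v ∈ simul0 F d) ↔ ∀ v, v ∈ timeAxis F d ↔ L v ∈ timeAxis F d := by
  rw [forall_mem_timeAxis_iff_apply_unitVec_mem]
  exact ⟨apply_unitVec_mem_timeAxis_of_mapsTo_simul0 hL,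
    mapsTo_simul0_of_apply_unitVec_mem_timeAxis hL⟩

end

end

theorem euclSim_and_galSim_iff_trivEuclSim_general [NeZero d]
    (A : (Fin d → F) → (Fin d → F)) :
    (EuclSim A ∧ GalSim A) ↔ TrivEuclSim A := by
  suffices h : EuclSim A → (GalSim A ↔ Respects2 A RestRel) from
    ⟨fun ⟨hE, hG⟩ => ⟨hE, (h hE).1 hG⟩, fun ⟨hE, hR⟩ => ⟨hE, (h hE).2 hR⟩⟩
  intro hE
  obtain ⟨L, t, a, hA, hL⟩ := hE.exists_linearEquiv
  have hsub : ∀ p q, A p - A q = L (p - q) := fun p q => by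
    rw [hA, hA, map_sub, add_sub_add_right_eq_sub]
  simp only [hE.galSim_iff, Respects2, apply_zero_eq_iff_sub_mem_simul0,
    restRel_iff_sub_mem_timeAxis]
  rw [forall_sub_mem_imp_iff hsub, forall_sub_mem_iff_iff hsub]
  exact mapsTo_simul0_iff_forall_mem_timeAxis_iff hL

/-- the maps that are both Euclidean and Galilean similarities
are exactly the trivial Euclidean similarities. -/
theorem euclSim_and_galSim_iff_trivEuclSim [NeZero d] (hd : 2 ≤ d)
    (A : (Fin d → F) → (Fin d → F)) :
    (EuclSim A ∧ GalSim A) ↔ TrivEuclSim A :=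
  euclSim_and_galSim_iff_trivEuclSim_general A

end Spacetimes
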